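/- Let I be a closed ideal of a Banach lattice E. If I has the weak Dunford–Pettis property and the quotient Banach lattice E/I has the positive Schur property, then E has the weak Dunford–Pettis property. -/

import Mathlib

open Filter Topology

/-- A Banach lattice `E` has the *weak Dunford–Pettis property* if (equivalently to the
definition via weakly compact operators) `φₙ(xₙ) → 0` whenever `(xₙ)` is a weakly null
sequence of positive vectors in `E` and `(φₙ)` is a weakly null sequence in `E*`. -/
def HasWeakDunfordPettisProperty (E : Type*) [NormedAddCommGroup E] [Lattice E] [HasSolidNorm E]
    [IsOrderedAddMonoid E]
    [NormedSpace ℝ E] : Prop :=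
  ∀ (x : ℕ → E) (φ : ℕ → E →L[ℝ] ℝ),
    (∀ n, 0 ≤ x n) →
    (∀ ψ : E →L[ℝ] ℝ, Tendsto (fun n => ψ (x n)) atTop (𝓝 0)) →
    (∀ Ψ : (E →L[ℝ] ℝ) →L[ℝ] ℝ, Tendsto (fun n => Ψ (φ n)) atTop (𝓝 0)) →
    Tendsto (fun n => φ n (x n)) atTop (𝓝 (0 : ℝ))

/-- The closed ideal `I`, as a Banach lattice in its own right, has the weak
Dunford–Pettis property. -/
def IdealHasWeakDunfordPettisProperty {E : Type*} [NormedAddCommGroup E] [Lattice E] [HasSolidNorm E]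
    [IsOrderedAddMonoid E]
    [NormedSpace ℝ E] (I : Submodule ℝ E) : Prop :=
  ∀ (x : ℕ → I) (φ : ℕ → I →L[ℝ] ℝ),
    (∀ n, (0 : E) ≤ (x n : E)) →
    (∀ ψ : I →L[ℝ] ℝ, Tendsto (fun n => ψ (x n)) atTop (𝓝 0)) →
    (∀ Ψ : (I →L[ℝ] ℝ) →L[ℝ] ℝ, Tendsto (fun n => Ψ (φ n)) atTop (𝓝 0)) →
    Tendsto (fun n => φ n (x n)) atTop (𝓝 (0 : ℝ))

/-- The quotient Banach lattice `E/I` has the positive Schur property; an element of the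
quotient is positive iff it has a positive representative. -/
def QuotientHasPositiveSchurProperty {E : Type*} [NormedAddCommGroup E] [Lattice E] [HasSolidNorm E]
    [IsOrderedAddMonoid E]
    [NormedSpace ℝ E] (I : Submodule ℝ E) : Prop :=
  ∀ u : ℕ → E ⧸ I, (∀ n, ∃ v : E, 0 ≤ v ∧ Submodule.Quotient.mk v = u n) →
    (∀ φ : (E ⧸ I) →L[ℝ] ℝ, Tendsto (fun n => φ (u n)) atTop (𝓝 0)) →
    Tendsto (fun n => ‖u n‖) atTop (𝓝 0)

/-- The positive part is dominated by the absolute value. -/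
lemma posPart_le_abs' {α : Type*} [Lattice α] [AddCommGroup α]
    [CovariantClass α α (· + ·) (· ≤ ·)] (a : α) : a⁺ ≤ |a| := by
  rw [posPart_def]
  exact sup_le (le_abs_self a) (abs_nonneg a)

/-- **Corollary.** Let `I` be a closed ideal of a Banach lattice `E`. If `I` has the weak
Dunford–Pettis property and `E/I` has the positive Schur property, then `E` has the weak
Dunford–Pettis property. -/

theorem weakDunfordPettis_of_ideal_of_quotient (E : Type*) [NormedAddCommGroup E] [Lattice E] [HasSolidNorm E]
    [IsOrderedAddMonoid E]
    [NormedSpace ℝ E] [CompleteSpace E]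
    (I : Submodule ℝ E) (hIclosed : IsClosed (I : Set E))
    (hIideal : ∀ x y : E, |x| ≤ |y| → y ∈ I → x ∈ I)
    (hI : IdealHasWeakDunfordPettisProperty I)
    (hQ : QuotientHasPositiveSchurProperty I) :
    HasWeakDunfordPettisProperty E := by
  intro x φ hx hwx hwφ
  -- The quotient map as a continuous linear map.
  let Q : E →L[ℝ] E ⧸ I :=
    LinearMap.mkContinuous I.mkQ 1 (fun e => by
      simpa using Submodule.Quotient.norm_mk_le I e)
  have hQmk : ∀ e : E, Q e = Submodule.Quotient.mk e := fun e => rfl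
  -- Step 1: positive Schur in the quotient gives ‖mk (x n)‖ → 0.
  have hqnorm : Tendsto (fun n => ‖(Submodule.Quotient.mk (x n) : E ⧸ I)‖) atTop (𝓝 0) := by
    apply hQ
    · exact fun n => ⟨x n, hx n, rfl⟩
    · intro ψ
      have := hwx (ψ.comp Q)
      simpa [hQmk] using this
  -- Step 2: choose representatives m n with mk (m n) = mk (x n), ‖m n‖ small.
  have hchoice : ∀ n : ℕ, ∃ m : E, x n - m ∈ I ∧
      ‖m‖ < ‖(Submodule.Quotient.mk (x n) : E ⧸ I)‖ + 1 / (n + 1) := by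
    intro n
    have hε : (0 : ℝ) < 1 / (n + 1) := by positivity
    obtain ⟨m, hm, hmlt⟩ :=
      Submodule.Quotient.norm_mk_lt (Submodule.Quotient.mk (x n) : E ⧸ I) hε
    exact ⟨m, (Submodule.Quotient.eq I).mp hm.symm, hmlt⟩
  choose m hmI hmlt using hchoice
  -- y n ∈ I approximates x n
  set y : ℕ → E := fun n => x n - m n with hy
  have hyI : ∀ n, y n ∈ I := hmI
  have hxy : ∀ n, ‖x n - y n‖ = ‖m n‖ := by intro n; simp [hy]
  have hxy0 : Tendsto (fun n => ‖x n - y n‖) atTop (𝓝 0) := by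
    have h1 : Tendsto (fun n : ℕ =>
        ‖(Submodule.Quotient.mk (x n) : E ⧸ I)‖ + 1 / (n + 1)) atTop (𝓝 0) := by
      have h2 : Tendsto (fun n : ℕ => 1 / ((n : ℝ) + 1)) atTop (𝓝 0) :=
        tendsto_one_div_add_atTop_nhds_zero_nat
      simpa using hqnorm.add h2
    refine squeeze_zero (fun n => norm_nonneg _) (fun n => ?_) h1
    rw [hxy n]
    exact (hmlt n).le
  -- Step 3: z n := x n ⊓ (y n)⁺ is a positive element of I close to x n.
  set z : ℕ → E := fun n => x n ⊓ (y n)⁺ with hz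
  have hz0 : ∀ n, (0 : E) ≤ z n := fun n => le_inf (hx n) (posPart_nonneg _)
  have hzI : ∀ n, z n ∈ I := by
    intro n
    refine hIideal _ _ ?_ (hyI n)
    have h1 : |z n| = z n := abs_of_nonneg (hz0 n)
    have h2 : z n ≤ |y n| := le_trans inf_le_right (posPart_le_abs' (y n))
    rw [h1]
    exact h2
  have hxz_nonneg : ∀ n, (0 : E) ≤ x n - z n := fun n => sub_nonneg.2 inf_le_left
  have hxz_le : ∀ n, x n - z n ≤ |x n - y n| := by
    intro n
    have h1 : z n = x n - (x n - (y n)⁺)⁺ := inf_eq_sub_posPart_sub _ _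
    have h2 : x n - z n = (x n - (y n)⁺)⁺ := by rw [h1]; abel
    rw [h2]
    have h3 : (x n - (y n)⁺)⁺ ≤ (x n - y n)⁺ :=
      posPart_mono (sub_le_sub_left (le_posPart (y n)) (x n))
    exact h3.trans (posPart_le_abs' _)
  have hxz_norm : ∀ n, ‖x n - z n‖ ≤ ‖x n - y n‖ := by
    intro n
    refine norm_le_norm_of_abs_le_abs ?_
    rw [abs_of_nonneg (hxz_nonneg n), ← abs_abs (x n - y n)]
    exact (hxz_le n).trans (le_abs_self _)
  have hxz0 : Tendsto (fun n => ‖x n - z n‖) atTop (𝓝 0) :=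
    squeeze_zero (fun n => norm_nonneg _) hxz_norm hxy0
  -- Step 4: the φ n are uniformly bounded (Banach–Steinhaus).
  obtain ⟨C, hC⟩ : ∃ C, ∀ n, ‖φ n‖ ≤ C := by
    apply banach_steinhaus
    intro e
    have h1 : Tendsto (fun n => φ n e) atTop (𝓝 0) := by
      have := hwφ (ContinuousLinearMap.apply ℝ ℝ e)
      simpa using this
    obtain ⟨B, hB⟩ := (h1.norm.bddAbove_range).imp (fun B hB => hB)
    exact ⟨B, fun n => hB ⟨n, rfl⟩⟩
  -- Step 5: apply the wDP property of I to the sequence z n and the restrictions φ n|I.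
  let R : (E →L[ℝ] ℝ) →L[ℝ] (I →L[ℝ] ℝ) :=
    (ContinuousLinearMap.compL ℝ I E ℝ).flip I.subtypeL
  have hR : ∀ (ψ : E →L[ℝ] ℝ) (v : I), R ψ v = ψ (v : E) := fun ψ v => rfl
  have hzw : Tendsto (fun n => φ n (z n)) atTop (𝓝 0) := by
    have := hI (fun n => ⟨z n, hzI n⟩) (fun n => R (φ n)) (fun n => hz0 n) ?_ ?_
    · simpa [hR] using this
    · -- weakly null in I
      intro ψ
      obtain ⟨g, hg, -⟩ := exists_extension_norm_eq (I : Submodule ℝ E) ψ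
      have h1 : Tendsto (fun n => g (x n)) atTop (𝓝 0) := hwx g
      have h2 : Tendsto (fun n => g (x n - z n)) atTop (𝓝 0) := by
        have hb : Tendsto (fun n => ‖g‖ * ‖x n - z n‖) atTop (𝓝 0) := by
          simpa using hxz0.const_mul ‖g‖
        exact squeeze_zero_norm (fun n => g.le_opNorm _) hb
      have h3 : Tendsto (fun n => g (z n)) atTop (𝓝 0) := by
        have := h1.sub h2
        simpa [map_sub] using this
      have h4 : ∀ n, ψ (⟨z n, hzI n⟩ : I) = g (z n) := fun n => (hg ⟨z n, hzI n⟩).symm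
      simpa [h4] using h3
    · intro Ψ
      have := hwφ (Ψ.comp R)
      simpa using this
  -- Step 6: conclude.
  have hrem : Tendsto (fun n => φ n (x n - z n)) atTop (𝓝 0) := by
    have hb : Tendsto (fun n => C * ‖x n - z n‖) atTop (𝓝 0) := by
      simpa using hxz0.const_mul C
    refine squeeze_zero_norm (fun n => ?_) hb
    calc ‖φ n (x n - z n)‖ ≤ ‖φ n‖ * ‖x n - z n‖ := (φ n).le_opNorm _
      _ ≤ C * ‖x n - z n‖ := by
          have := hC n
          have h0 : (0 : ℝ) ≤ ‖x n - z n‖ := norm_nonneg _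
          nlinarith
  have := hzw.add hrem
  simpa [map_sub] using this
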